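/- The functions max : ℝ² → ℝ, (a,b) ↦ max(a,b), and min : ℝ² → ℝ, (a,b) ↦ min(a,b), are poly-length-computable. -/

import Mathlib

/-- The length of the curve `y` between times `0` and `t`
(using one-sided derivatives on `[0, ∞)` and the sup norm). -/
noncomputable def curveLen {d : ℕ} (y : ℝ → Fin d → ℝ) (t : ℝ) : ℝ :=
  ∫ u in (0:ℝ)..t, ‖derivWithin y (Set.Ici 0) u‖

/-- `f :⊆ ℝⁿ → ℝᵐ` with domain `dom` is poly-length-computable. -/
def PolyLengthComputable (n m : ℕ) (dom : Set (Fin n → ℝ))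
    (f : (Fin n → ℝ) → Fin m → ℝ) : Prop :=
  ∃ (d : ℕ) (hd : m ≤ d) (p : Fin d → MvPolynomial (Fin d) ℚ)
    (q : Fin d → MvPolynomial (Fin n) ℚ) (Ω : MvPolynomial (Fin 2) ℝ),
    (∀ α μ : ℝ, 0 ≤ α → 0 ≤ μ → 0 ≤ MvPolynomial.eval ![α, μ] Ω) ∧
    ∀ x ∈ dom, ∃ y : ℝ → Fin d → ℝ,
      (∀ i, y 0 i = MvPolynomial.aeval x (q i)) ∧
      (∀ t : ℝ, 0 ≤ t →
        HasDerivWithinAt y (fun i => MvPolynomial.aeval (y t) (p i)) (Set.Ici 0) t) ∧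
      (∀ t : ℝ, 0 ≤ t → ∀ μ : ℝ, 0 ≤ μ →
        MvPolynomial.eval ![‖x‖, μ] Ω ≤ curveLen y t →
        ‖(fun j : Fin m => y t (Fin.castLE hd j)) - f x‖ ≤ Real.exp (-μ)) ∧
      (∀ t : ℝ, 0 ≤ t → t ≤ curveLen y t)

/-!
Since `max a b = (a + b)/2 + |a - b|/2` and `min a b = (a + b)/2 - |a - b|/2`, it suffices to
approximate `|c|`, `c = a - b`, by `c tanh(c s)`. With `s = eᵗ - 1`, which a polynomial ODE produces
from the coordinate `c eᵗ`, the error is at most `|c| exp(-|c|(eᵗ - 1))`. If the length reaches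
`Ω(‖x‖, μ)`, then either `t ≥ μ + 1`, and the error is at most `1/(eᵗ - 1) ≤ e^{-μ}`, or the
coordinate `c eᵗ` accounts for most of the length, which forces `|c|(eᵗ - 1) ≥ μ + 2‖x‖`.
-/

open Real Set

theorem Real.hasDerivAt_tanh (z : ℝ) : HasDerivAt tanh (1 - tanh z ^ 2) z := by
  have h : HasDerivAt (fun w => sinh w / cosh w)
      ((cosh z * cosh z - sinh z * sinh z) / cosh z ^ 2) z :=
    (hasDerivAt_sinh z).div (hasDerivAt_cosh z) (cosh_pos z).ne'
  rw [← funext tanh_eq_sinh_div_cosh] at h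
  refine h.congr_deriv ?_
  have := (cosh_pos z).ne'
  rw [tanh_eq_sinh_div_cosh]
  field_simp

theorem Real.abs_tanh_le_one (z : ℝ) : |tanh z| ≤ 1 :=
  abs_le.2 ⟨(neg_one_lt_tanh z).le, (tanh_lt_one z).le⟩

theorem Real.one_sub_tanh_le (z : ℝ) : 1 - tanh z ≤ 2 * exp (-(2 * z)) := by
  have hcosh : exp z / 2 ≤ cosh z := by rw [cosh_eq]; linarith [exp_pos (-z)]
  calc 1 - tanh z = exp (-z) / cosh z := by
        rw [tanh_eq_sinh_div_cosh, ← cosh_sub_sinh]; field_simp [(cosh_pos z).ne']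
    _ ≤ exp (-z) / (exp z / 2) := by gcongr
    _ = 2 * exp (-(2 * z)) := by
        rw [show -(2 * z) = -z + -z by ring, exp_add, exp_neg z]; field_simp

theorem Real.mul_tanh_mul_eq_abs (c τ : ℝ) : c * tanh (c * τ) = |c| * tanh (|c| * τ) := by
  rcases abs_cases c with ⟨h, _⟩ | ⟨h, _⟩
  · rw [h]
  · rw [h, neg_mul, neg_mul, tanh_neg]; ring

section CurveLength

variable {d : ℕ} {F : (Fin d → ℝ) → Fin d → ℝ} {y : ℝ → Fin d → ℝ} {t : ℝ}

theorem curveLen_eq_integral (hy : ∀ u, 0 ≤ u → HasDerivWithinAt y (F (y u)) (Ici 0) u)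
    (ht : 0 ≤ t) : curveLen y t = ∫ u in (0:ℝ)..t, ‖F (y u)‖ := by
  refine intervalIntegral.integral_congr fun u hu => ?_
  rw [uIcc_of_le ht] at hu
  simp only [(hy u hu.1).derivWithin (uniqueDiffOn_Ici 0 u hu.1)]

theorem intervalIntegrable_norm_comp (hF : Continuous F)
    (hy : ∀ u, 0 ≤ u → HasDerivWithinAt y (F (y u)) (Ici 0) u) (ht : 0 ≤ t) :
    IntervalIntegrable (fun u => ‖F (y u)‖) MeasureTheory.volume 0 t := by
  have hcont : ContinuousOn y (Ici 0) := fun u hu => (hy u hu).continuousWithinAt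
  refine ((hF.comp_continuousOn hcont).norm.mono ?_).intervalIntegrable
  rw [uIcc_of_le ht]
  exact Icc_subset_Ici_self

theorem le_curveLen (hF : Continuous F) (hF1 : ∀ z, 1 ≤ ‖F z‖)
    (hy : ∀ u, 0 ≤ u → HasDerivWithinAt y (F (y u)) (Ici 0) u) (ht : 0 ≤ t) :
    t ≤ curveLen y t := by
  rw [curveLen_eq_integral hy ht]
  calc t = ∫ _ in (0:ℝ)..t, (1:ℝ) := by simp
    _ ≤ ∫ u in (0:ℝ)..t, ‖F (y u)‖ := intervalIntegral.integral_mono_on ht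
        intervalIntegrable_const (intervalIntegrable_norm_comp hF hy ht) fun u _ => hF1 _

theorem curveLen_le (hF : Continuous F) {K : ℝ}
    (hy : ∀ u, 0 ≤ u → HasDerivWithinAt y (F (y u)) (Ici 0) u)
    (hK : ∀ u, 0 ≤ u → ‖F (y u)‖ ≤ 1 + K * exp u) (ht : 0 ≤ t) :
    curveLen y t ≤ t + K * (exp t - 1) := by
  have hbound : Continuous fun u => 1 + K * exp u := by fun_prop
  rw [curveLen_eq_integral hy ht]
  calc ∫ u in (0:ℝ)..t, ‖F (y u)‖ ≤ ∫ u in (0:ℝ)..t, 1 + K * exp u :=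
        intervalIntegral.integral_mono_on ht (intervalIntegrable_norm_comp hF hy ht)
          (hbound.intervalIntegrable 0 t) fun u hu => hK u hu.1
    _ = t + K * (exp t - 1) := by
        rw [intervalIntegral.integral_add intervalIntegrable_const
          ((continuous_exp.intervalIntegrable 0 t).const_mul K),
          intervalIntegral.integral_const_mul, integral_exp]
        simp

end CurveLength

open MvPolynomial

theorem MvPolynomial.continuous_aeval_rat {σ : Type*} (p : MvPolynomial σ ℚ) :
    Continuous fun x : σ → ℝ => aeval x p := by
  simpa only [aeval_def, eval₂_eq_eval_map] using continuous_eval (p.map (algebraMap ℚ ℝ))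

noncomputable def absApproxField (ε : ℚ) : Fin 5 → MvPolynomial (Fin 5) ℚ :=
  ![C (ε / 2) * X 1 * ((1 - X 3 ^ 2) * X 2), 0, X 2, (1 - X 3 ^ 2) * X 2, 1]

noncomputable def absApproxInit : Fin 5 → MvPolynomial (Fin 2) ℚ :=
  ![C (1 / 2) * (X 0 + X 1), X 0 - X 1, X 0 - X 1, 0, 0]

/-- The clock `eᵗ - 1` makes the error decay exponentially in `t` even for small `c`, while the
last coordinate keeps the speed at least `1` without making the length exponential in `t`. -/
noncomputable def absApproxCurve (ε m c t : ℝ) : Fin 5 → ℝ :=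
  ![m + ε * (c / 2) * tanh (c * (exp t - 1)), c, c * exp t, tanh (c * (exp t - 1)), t]

noncomputable def absApproxModulus : MvPolynomial (Fin 2) ℝ :=
  (1 + C 2 * X 0) * (C 2 * X 1 + C 2 * X 0 + 1)

theorem aeval_absApproxField (ε : ℚ) (z : Fin 5 → ℝ) :
    (fun i => aeval z (absApproxField ε i)) =
      ![ε / 2 * z 1 * ((1 - z 3 ^ 2) * z 2), 0, z 2, (1 - z 3 ^ 2) * z 2, 1] := by
  ext i
  fin_cases i <;> simp [absApproxField]

theorem one_le_norm_aeval_absApproxField (ε : ℚ) (z : Fin 5 → ℝ) :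
    1 ≤ ‖fun i => aeval z (absApproxField ε i)‖ := by
  refine le_trans ?_ (norm_le_pi_norm _ 4)
  simp [absApproxField]

theorem norm_aeval_absApproxField_le {ε : ℚ} (hε : |(ε : ℝ)| ≤ 1) {z : Fin 5 → ℝ}
    (hz : |z 3| ≤ 1) :
    ‖fun i => aeval z (absApproxField ε i)‖ ≤ 1 + (1 + |z 1|) * |z 2| := by
  have hT : |1 - z 3 ^ 2| ≤ 1 := by
    rw [abs_le]; constructor <;> nlinarith [abs_nonneg (z 3), sq_abs (z 3)]
  have h12 := abs_nonneg (z 1)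
  have h2 := abs_nonneg (z 2)
  rw [aeval_absApproxField, pi_norm_le_iff_of_nonneg (by positivity)]
  intro i
  fin_cases i <;> simp only [Real.norm_eq_abs] <;> simp [abs_mul, abs_div]
  · have : |(ε : ℝ)| / 2 * |z 1| * (|1 - z 3 ^ 2| * |z 2|) ≤ 1 / 2 * |z 1| * (1 * |z 2|) := by
      gcongr
    nlinarith
  · positivity
  · nlinarith
  · nlinarith [mul_le_mul_of_nonneg_right hT h2]
  · positivity

theorem hasDerivAt_absApproxCurve (ε : ℚ) (m c t : ℝ) :
    HasDerivAt (absApproxCurve ε m c)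
      (fun i => aeval (absApproxCurve ε m c t) (absApproxField ε i)) t := by
  set g' := (1 - tanh (c * (exp t - 1)) ^ 2) * (c * exp t)
  have hg : HasDerivAt (fun t => tanh (c * (exp t - 1))) g' t :=
    (hasDerivAt_tanh _).comp t (((hasDerivAt_exp t).sub_const 1).const_mul c)
  have hfield : (fun i => aeval (absApproxCurve ε m c t) (absApproxField ε i)) =
      ![ε * (c / 2) * g', 0, c * exp t, g', 1] := by
    rw [aeval_absApproxField]
    ext i
    fin_cases i <;>
      simp only [absApproxCurve, g', Fin.isValue, Fin.zero_eta, Fin.mk_one, Fin.reduceFinMk,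
        Matrix.cons_val]
    ring
  rw [hfield, hasDerivAt_pi]
  intro i
  fin_cases i
  · simpa [absApproxCurve] using (hg.const_mul (ε * (c / 2))).const_add m
  · simpa [absApproxCurve] using hasDerivAt_const t c
  · simpa [absApproxCurve] using (hasDerivAt_exp t).const_mul c
  · simpa [absApproxCurve] using hg
  · simpa [absApproxCurve] using hasDerivAt_id' t

theorem abs_absApproxCurve_sub_le {ε : ℝ} (hε : |ε| ≤ 1) (m c : ℝ) {t : ℝ} (ht : 0 ≤ t) :
    |absApproxCurve ε m c t 0 - (m + ε * (|c| / 2))| ≤ |c| * exp (-(|c| * (exp t - 1))) := by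
  set z := |c| * (exp t - 1)
  have hz : 0 ≤ z := mul_nonneg (abs_nonneg c) (by linarith [add_one_le_exp t])
  have hgap : 0 ≤ 1 - tanh z := by linarith [tanh_lt_one z]
  have herr : absApproxCurve ε m c t 0 - (m + ε * (|c| / 2)) =
      -(ε * (|c| / 2 * (1 - tanh z))) := by
    simp only [absApproxCurve, Matrix.cons_val_zero, z]
    rw [mul_assoc ε, ← mul_div_right_comm, mul_tanh_mul_eq_abs]
    ring
  calc |absApproxCurve ε m c t 0 - (m + ε * (|c| / 2))|
      = |ε| * (|c| / 2 * (1 - tanh z)) := by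
        rw [herr, abs_neg, abs_mul, abs_of_nonneg (mul_nonneg (by positivity) hgap)]
    _ ≤ 1 * (|c| / 2 * (2 * exp (-(2 * z)))) := by gcongr; exact one_sub_tanh_le z
    _ ≤ |c| * exp (-z) := by
        rw [one_mul, ← mul_assoc, div_mul_cancel₀ _ two_ne_zero]
        gcongr
        linarith

theorem mul_exp_neg_mul_le_inv {c τ : ℝ} (hτ : 0 < τ) :
    c * exp (-(c * τ)) ≤ τ⁻¹ := by
  rw [exp_neg, ← div_eq_mul_inv, div_le_iff₀ (exp_pos _), inv_mul_eq_div, le_div_iff₀ hτ]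
  linarith [add_one_le_exp (c * τ)]

theorem mul_exp_neg_mul_le_exp_neg {α μ c t : ℝ} (hμ : 0 ≤ μ) (ht : 0 ≤ t) (hc : 0 ≤ c)
    (hcα : c ≤ 2 * α) (hlen : (1 + 2 * α) * (2 * μ + 2 * α + 1) ≤ t + (1 + c) * c * (exp t - 1)) :
    c * exp (-(c * (exp t - 1))) ≤ exp (-μ) := by
  have hτ : 0 ≤ exp t - 1 := by linarith [add_one_le_exp t]
  by_cases hlong : μ + 1 ≤ t
  · have hexp : exp μ + 1 ≤ exp t := by
      calc exp μ + 1 ≤ exp μ * 2 := by linarith [one_le_exp hμ]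
        _ ≤ exp μ * exp 1 := by gcongr; linarith [add_one_le_exp (1 : ℝ)]
        _ ≤ exp t := by rw [← exp_add]; exact exp_le_exp.2 (by linarith)
    calc c * exp (-(c * (exp t - 1))) ≤ (exp t - 1)⁻¹ :=
          mul_exp_neg_mul_le_inv (by linarith [exp_pos μ])
      _ ≤ exp (-μ) := by
          rw [exp_neg]; exact inv_anti₀ (exp_pos μ) (by linarith)
  · -- otherwise the coordinate `c eᵗ` has travelled far, so `c (eᵗ - 1) ≥ μ + 2α`
    have hfar : μ + 2 * α ≤ c * (exp t - 1) := by
      have h1 : (1 + 2 * α) * (μ + 2 * α) ≤ (1 + 2 * α) * (c * (exp t - 1)) := by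
        nlinarith [mul_nonneg hc hτ]
      exact le_of_mul_le_mul_left h1 (by linarith)
    calc c * exp (-(c * (exp t - 1))) ≤ exp (2 * α) * exp (-(μ + 2 * α)) := by
          gcongr
          linarith [add_one_le_exp (2 * α)]
      _ = exp (-μ) := by rw [← exp_add]; ring_nf

theorem eval_absApproxModulus (α μ : ℝ) :
    eval ![α, μ] absApproxModulus = (1 + 2 * α) * (2 * μ + 2 * α + 1) := by
  simp [absApproxModulus]

theorem polyLengthComputable_midpoint_add_mul_abs {ε : ℚ} (hε : |(ε : ℝ)| ≤ 1) :
    PolyLengthComputable 2 1 univ (fun v _ => (v 0 + v 1) / 2 + ε * (|v 0 - v 1| / 2)) := by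
  refine ⟨5, by norm_num, absApproxField ε, absApproxInit, absApproxModulus,
    fun α μ hα hμ => by rw [eval_absApproxModulus]; positivity, fun x _ => ?_⟩
  set c := x 0 - x 1
  set y := absApproxCurve ε ((x 0 + x 1) / 2) c
  have hy (u : ℝ) (_ : 0 ≤ u) :
      HasDerivWithinAt y (fun i => aeval (y u) (absApproxField ε i)) (Ici 0) u :=
    (hasDerivAt_absApproxCurve ε _ c u).hasDerivWithinAt
  have hF : Continuous fun z : Fin 5 → ℝ => fun i => aeval z (absApproxField ε i) :=
    continuous_pi fun i => continuous_aeval_rat _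
  refine ⟨y, fun i => ?_, hy, fun t ht μ hμ hlen => ?_,
    fun t ht => le_curveLen hF (one_le_norm_aeval_absApproxField ε) hy ht⟩
  · fin_cases i <;> simp [y, absApproxCurve, absApproxInit, c, div_eq_inv_mul]
  have hspeed (u : ℝ) (_ : 0 ≤ u) :
      ‖fun i => aeval (y u) (absApproxField ε i)‖ ≤ 1 + (1 + |c|) * |c| * exp u := by
    refine (norm_aeval_absApproxField_le hε (abs_tanh_le_one _)).trans_eq ?_
    simp [y, absApproxCurve, abs_mul, abs_of_pos (exp_pos u)]
    ring
  have hcx : |c| ≤ 2 * ‖x‖ := by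
    have h0 := norm_le_pi_norm x 0
    have h1 := norm_le_pi_norm x 1
    rw [Real.norm_eq_abs] at h0 h1
    linarith [abs_sub (x 0) (x 1)]
  rw [eval_absApproxModulus] at hlen
  have hconv := mul_exp_neg_mul_le_exp_neg hμ ht (abs_nonneg c) hcx
    (hlen.trans (curveLen_le hF hy hspeed ht))
  rw [pi_norm_le_iff_of_nonneg (exp_pos _).le]
  intro j
  fin_cases j
  exact (abs_absApproxCurve_sub_le hε _ c ht).trans hconv

/-- The binary maximum and minimum functions ℝ² → ℝ are poly-length-computable. -/
theorem max_min_polyLengthComputable :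
    PolyLengthComputable 2 1 Set.univ (fun v _ => max (v 0) (v 1)) ∧
    PolyLengthComputable 2 1 Set.univ (fun v _ => min (v 0) (v 1)) := by
  constructor
  · convert polyLengthComputable_midpoint_add_mul_abs (ε := 1) (by simp) using 4 with v
    refine (sup_eq_half_smul_add_add_abs_sub' ℝ (v 0) (v 1)).trans ?_
    rw [abs_sub_comm, smul_eq_mul]
    push_cast
    ring
  · convert polyLengthComputable_midpoint_add_mul_abs (ε := -1) (by simp) using 4 with v
    refine (inf_eq_half_smul_add_sub_abs_sub' ℝ (v 0) (v 1)).trans ?_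
    rw [abs_sub_comm, smul_eq_mul]
    push_cast
    ring
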